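/- arXiv:2308.09152 — 2 statements merged into one kernel-verified Lean document; each statement's English description precedes it below -/
import Mathlib

section
/- Let γ_e, γ_p, d_E, d_P > 0 with γ_e/d_E > γ_p/d_P. The function S(t) = (θ_E − θ_P) + arcsin(γ_e t/d_E) − arcsin(γ_p t/d_P) is convex on [0, min(d_E/γ_e, d_P/γ_p)), and consequently S(t) ≥ (θ_E − θ_P) + (γ_e/d_E − γ_p/d_P) t for all t in that interval. -/
/-!
With `a = γe/dE > b = γp/dP`, the second derivative of `arcsin (a t) - arcsin (b t)` is
`a³t/(1 - a²t²)^(3/2) - b³t/(1 - b²t²)^(3/2)`, which is nonnegative for `0 ≤ t < 1/a` because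
`c ↦ c³t/(1 - c²t²)^(3/2)` increases in `c ≥ 0`. The lower bound is the tangent line of this
convex function at `0`, where its slope is `a - b`.
-/

open Real Set

theorem hasDerivAt_arcsin_const_mul (c x : ℝ) (h₁ : c * x ≠ -1) (h₂ : c * x ≠ 1) :
    HasDerivAt (fun t => arcsin (c * t)) (c / √(1 - (c * x) ^ 2)) x :=
  ((hasDerivAt_arcsin h₁ h₂).comp x ((hasDerivAt_id' x).const_mul c)).congr_deriv (by ring)

theorem hasDerivAt_const_div_sqrt_one_sub_sq (c x : ℝ) (h : (c * x) ^ 2 < 1) :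
    HasDerivAt (fun t => c / √(1 - (c * t) ^ 2)) (c ^ 3 * x / √(1 - (c * x) ^ 2) ^ 3) x := by
  have hpos : 0 < 1 - (c * x) ^ 2 := sub_pos.mpr h
  have hsqrt := ((((hasDerivAt_id' x).const_mul c).fun_pow 2).const_sub 1).sqrt hpos.ne'
  refine ((hasDerivAt_const x c).fun_div hsqrt (sqrt_pos.mpr hpos).ne').congr_deriv ?_
  push_cast
  field_simp
  ring

theorem pow_three_mul_div_sqrt_one_sub_sq_le {a b x : ℝ} (hb : 0 ≤ b) (hba : b ≤ a)
    (hx : 0 ≤ x) (hax : a * x < 1) :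
    b ^ 3 * x / √(1 - (b * x) ^ 2) ^ 3 ≤ a ^ 3 * x / √(1 - (a * x) ^ 2) ^ 3 := by
  have hbx : 0 ≤ b * x := mul_nonneg hb hx
  have hbxax : b * x ≤ a * x := mul_le_mul_of_nonneg_right hba hx
  have hpos : 0 < 1 - (a * x) ^ 2 := by nlinarith
  apply div_le_div₀ (mul_nonneg (pow_nonneg (hb.trans hba) 3) hx) (by gcongr)
    (pow_pos (sqrt_pos.mpr hpos) 3)
  gcongr

theorem convexOn_arcsin_mul_sub_arcsin_mul {a b : ℝ} (hb : 0 ≤ b) (hba : b ≤ a) :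
    ConvexOn ℝ (Ico 0 a⁻¹) (fun t => arcsin (a * t) - arcsin (b * t)) := by
  have hbounds : ∀ x ∈ Ioo 0 a⁻¹, 0 ≤ b * x ∧ b * x ≤ a * x ∧ a * x < 1 := by
    rintro x ⟨hx, hxa⟩
    have ha : 0 < a := inv_pos.mp (hx.trans hxa)
    refine ⟨mul_nonneg hb hx.le, mul_le_mul_of_nonneg_right hba hx.le, ?_⟩
    simpa [mul_inv_cancel₀ ha.ne'] using mul_lt_mul_of_pos_left hxa ha
  refine convexOn_of_hasDerivWithinAt2_nonneg (convex_Ico 0 a⁻¹) (by fun_prop)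
    (f' := fun x => a / √(1 - (a * x) ^ 2) - b / √(1 - (b * x) ^ 2))
    (f'' := fun x => a ^ 3 * x / √(1 - (a * x) ^ 2) ^ 3 - b ^ 3 * x / √(1 - (b * x) ^ 2) ^ 3)
    ?_ ?_ ?_ <;> rw [interior_Ico] <;> intro x hx <;> obtain ⟨hbx, hbxax, hax⟩ := hbounds x hx
  · exact ((hasDerivAt_arcsin_const_mul a x (by linarith) hax.ne).sub
      (hasDerivAt_arcsin_const_mul b x (by linarith) (by linarith))).hasDerivWithinAt
  · exact ((hasDerivAt_const_div_sqrt_one_sub_sq a x (by nlinarith)).sub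
      (hasDerivAt_const_div_sqrt_one_sub_sq b x (by nlinarith))).hasDerivWithinAt
  · exact sub_nonneg.mpr (pow_three_mul_div_sqrt_one_sub_sq_le hb hba hx.1.le hax)

theorem ConvexOn.add_mul_sub_le_of_hasDerivAt {s : Set ℝ} {f : ℝ → ℝ} {f' x y : ℝ}
    (hfc : ConvexOn ℝ s f) (hx : x ∈ s) (hy : y ∈ s) (hxy : x ≤ y) (hf : HasDerivAt f f' x) :
    f x + f' * (y - x) ≤ f y := by
  rcases hxy.eq_or_lt with rfl | hlt
  · simp
  have := hfc.le_slope_of_hasDerivAt hx hy hlt hf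
  rw [slope_def_field, le_div_iff₀ (sub_pos.mpr hlt)] at this
  linarith

theorem stmt_7_general (γe γp dE dP θE θP : ℝ)
    (hγp : 0 < γp) (hdP : 0 < dP)
    (hratio : γp / dP < γe / dE)
    (S : ℝ → ℝ)
    (hS : ∀ t, S t = (θE - θP) + Real.arcsin (γe * t / dE) - Real.arcsin (γp * t / dP)) :
    ConvexOn ℝ (Set.Ico 0 (min (dE / γe) (dP / γp))) S ∧
      ∀ t ∈ Set.Ico 0 (min (dE / γe) (dP / γp)),
        (θE - θP) + (γe / dE - γp / dP) * t ≤ S t := by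
  have hS_eq : S = fun t => (arcsin (γe / dE * t) - arcsin (γp / dP * t)) + (θE - θP) := by
    funext t
    rw [hS, mul_div_right_comm, mul_div_right_comm γp]
    ring
  have hsub : Ico 0 (min (dE / γe) (dP / γp)) ⊆ Ico 0 (γe / dE)⁻¹ := by
    rw [inv_div]
    exact Ico_subset_Ico_right (min_le_left _ _)
  have hconv : ConvexOn ℝ (Ico 0 (min (dE / γe) (dP / γp))) S := by
    rw [hS_eq]
    exact ((convexOn_arcsin_mul_sub_arcsin_mul (div_pos hγp hdP).le hratio.le).subset hsub
      (convex_Ico _ _)).add_const _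
  have hderiv : HasDerivAt S (γe / dE - γp / dP) 0 := by
    rw [hS_eq]
    refine (((hasDerivAt_arcsin_const_mul (γe / dE) 0 (by simp) (by simp)).fun_sub
      (hasDerivAt_arcsin_const_mul (γp / dP) 0 (by simp) (by simp))).add_const _).congr_deriv ?_
    simp
  refine ⟨hconv, fun t ht => ?_⟩
  simpa [hS] using hconv.add_mul_sub_le_of_hasDerivAt ⟨le_rfl, ht.1.trans_lt ht.2⟩ ht ht.1 hderiv

/-- If `γ_e/d_E > γ_p/d_P`, then
`S(t) = (θ_E − θ_P) + arcsin(γ_e t/d_E) − arcsin(γ_p t/d_P)` is convex on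
`[0, min(d_E/γ_e, d_P/γ_p))` and satisfies the tangent-line lower bound
`S(t) ≥ (θ_E − θ_P) + (γ_e/d_E − γ_p/d_P) t` there. -/
theorem stmt_7 (γe γp dE dP θE θP : ℝ)
    (hγe : 0 < γe) (hγp : 0 < γp) (hdE : 0 < dE) (hdP : 0 < dP)
    (hratio : γp / dP < γe / dE)
    (S : ℝ → ℝ)
    (hS : ∀ t, S t = (θE - θP) + Real.arcsin (γe * t / dE) - Real.arcsin (γp * t / dP)) :
    ConvexOn ℝ (Set.Ico 0 (min (dE / γe) (dP / γp))) S ∧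
      ∀ t ∈ Set.Ico 0 (min (dE / γe) (dP / γp)),
        (θE - θP) + (γe / dE - γp / dP) * t ≤ S t :=
  stmt_7_general γe γp dE dP θE θP hγp hdP hratio S hS
end

section
/- Let γ_e, γ_p, d_E, d_P > 0 with γ_e/d_E > γ_p/d_P, and θ_E − θ_P < π. Set t̂ = (π − (θ_E − θ_P)) / (γ_e/d_E − γ_p/d_P). If t̂ ≤ min(d_E/γ_e, d_P/γ_p), then there exists t ∈ [0, t̂] with S(t) = π, where S(t) = (θ_E − θ_P) + arcsin(γ_e t/d_E) − arcsin(γ_p t/d_P); moreover the smallest such t is at most t̂. -/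
/-!
The function `S` is continuous with `S 0 = θE - θP < π`. Since `sin` is `1`-Lipschitz, `arcsin`
expands distances on `[-1, 1]`. At `t = t̂` both arguments of `arcsin` lie in `[0, 1]`,
so `S t̂ ≥ (θE - θP) + (γe / dE - γp / dP) * t̂ = π`, and the
intermediate value theorem gives a root in `[0, t̂]`.
-/

open Real

theorem Real.abs_sub_le_abs_arcsin_sub {x y : ℝ} (hx₁ : -1 ≤ x) (hx₂ : x ≤ 1)
    (hy₁ : -1 ≤ y) (hy₂ : y ≤ 1) : |x - y| ≤ |arcsin x - arcsin y| := by
  simpa only [sin_arcsin hx₁ hx₂, sin_arcsin hy₁ hy₂] using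
    abs_sin_sub_sin_le (arcsin x) (arcsin y)

theorem Real.sub_le_arcsin_sub_arcsin {x y : ℝ} (hy : -1 ≤ y) (hyx : y ≤ x) (hx : x ≤ 1) :
    x - y ≤ arcsin x - arcsin y := by
  have h := abs_sub_le_abs_arcsin_sub (hy.trans hyx) hx hy (hyx.trans hx)
  rwa [abs_of_nonneg (sub_nonneg.mpr hyx),
    abs_of_nonneg (sub_nonneg.mpr (monotone_arcsin hyx))] at h

theorem mul_div_le_one_of_le_div {γ d t : ℝ} (hγ : 0 < γ) (hd : 0 < d) (ht : t ≤ d / γ) :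
    γ * t / d ≤ 1 := by
  rw [div_le_one hd, mul_comm, ← le_div_iff₀ hγ]
  exact ht

/-- If `γ_e/d_E > γ_p/d_P` and `θ_E − θ_P < π`, setting
`t̂ = (π − (θ_E − θ_P)) / (γ_e/d_E − γ_p/d_P)`, if `t̂ ≤ min(d_E/γ_e, d_P/γ_p)` then
`S(t) = π` has a solution in `[0, t̂]`, and the smallest nonnegative solution is
at most `t̂`. -/
theorem stmt_8 (γe γp dE dP θE θP : ℝ)
    (hγe : 0 < γe) (hγp : 0 < γp) (hdE : 0 < dE) (hdP : 0 < dP)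
    (hratio : γp / dP < γe / dE) (hθ : θE - θP < Real.pi)
    (S : ℝ → ℝ)
    (hS : ∀ t, S t = (θE - θP) + Real.arcsin (γe * t / dE) - Real.arcsin (γp * t / dP))
    (that : ℝ)
    (hthat : that = (Real.pi - (θE - θP)) / (γe / dE - γp / dP))
    (hle : that ≤ min (dE / γe) (dP / γp)) :
    (∃ t ∈ Set.Icc 0 that, S t = Real.pi) ∧
      sInf {t : ℝ | 0 ≤ t ∧ S t = Real.pi} ≤ that := by
  have hslope : 0 < γe / dE - γp / dP := sub_pos.mpr hratio
  have hthat_nonneg : 0 ≤ that := hthat ▸ div_nonneg (sub_pos.mpr hθ).le hslope.le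
  have hgap : γe * that / dE - γp * that / dP = π - (θE - θP) := by
    rw [show γe * that / dE - γp * that / dP = that * (γe / dE - γp / dP) by ring, hthat,
      div_mul_cancel₀ _ hslope.ne']
  have hS_that : π ≤ S that := by
    have hb : 0 ≤ γp * that / dP := by positivity
    have := sub_le_arcsin_sub_arcsin (by linarith) (by linarith)
      (mul_div_le_one_of_le_div hγe hdE (hle.trans (min_le_left _ _)))
    rw [hS]
    linarith
  have hS_cont : Continuous S := by
    rw [funext hS]
    fun_prop
  obtain ⟨t, ht, hSt⟩ : ∃ t ∈ Set.Icc 0 that, S t = π :=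
    intermediate_value_Icc hthat_nonneg hS_cont.continuousOn
      ⟨by simpa only [hS, mul_zero, zero_div, arcsin_zero, add_zero, sub_zero] using hθ.le,
        hS_that⟩
  have hbdd : BddBelow {t : ℝ | 0 ≤ t ∧ S t = π} := ⟨0, fun _ hs ↦ hs.1⟩
  exact ⟨⟨t, ht, hSt⟩, (csInf_le hbdd ⟨ht.1, hSt⟩).trans ht.2⟩
end
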